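/- arXiv:1309.3751 — 3 statements merged into one kernel-verified Lean document; each statement's English description precedes it below -/
import Mathlib

section
/- There exist constants k₁, k₂ > 0 such that for every Schwartz function f : ℝ → ℂ, k₁·(‖f''‖² + ‖x ↦ x²·f(x)‖² + ‖f‖²) ≤ ‖x ↦ -f''(x) + x²·f(x)‖² + ‖f‖² ≤ k₂·(‖f''‖² + ‖x ↦ x²·f(x)‖² + ‖f‖²). -/
/-!
Write `T f = -f'' + x² f`. Expanding the square gives
`‖T f‖² = ‖f''‖² + ‖x² f‖² - 2 ⟪x² f, f''⟫`, and integrating by parts twice (the second time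
in the commutator identity `2 ⟪x f, f'⟫ = -‖f‖²`) gives `⟪x² f, f''⟫ = ‖f‖² - ‖x f'‖² ≤ ‖f‖²`.
Hence `‖T f‖² + ‖f‖²` is at least both `‖f''‖² + ‖x² f‖² - ‖f‖²` and `‖f‖²`, so at least a third
of `‖f''‖² + ‖x² f‖² + ‖f‖²`; the upper bound is the parallelogram law.
Here `⟪·, ·⟫` is the real inner product, i.e. the real part of the `L²` pairing when `F = ℂ`.
-/

open MeasureTheory

/-- The `L²(ℝ)` norm of a function `f : ℝ → ℂ`. -/
noncomputable def L2N (f : ℝ → ℂ) : ℝ := (∫ x : ℝ, ‖f x‖ ^ 2) ^ ((1 : ℝ) / 2)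

open scoped RealInnerProductSpace

section Expansion

variable {α F : Type*} [MeasurableSpace α] {μ : Measure α}
  [NormedAddCommGroup F] [InnerProductSpace ℝ F] {g h : α → F}

theorem integral_norm_neg_add_sq (hg : Integrable (fun x => ‖g x‖ ^ 2) μ)
    (hh : Integrable (fun x => ‖h x‖ ^ 2) μ) (hgh : Integrable (fun x => ⟪h x, g x⟫) μ) :
    ∫ x, ‖-g x + h x‖ ^ 2 ∂μ
      = ∫ x, ‖g x‖ ^ 2 ∂μ + ∫ x, ‖h x‖ ^ 2 ∂μ - 2 * ∫ x, ⟪h x, g x⟫ ∂μ := by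
  calc ∫ x, ‖-g x + h x‖ ^ 2 ∂μ = ∫ x, (‖g x‖ ^ 2 + ‖h x‖ ^ 2) - 2 * ⟪h x, g x⟫ ∂μ := by
        congr 1 with x
        rw [neg_add_eq_sub, norm_sub_sq_real, real_inner_comm]
        ring
    _ = _ := by
        have hgh' : Integrable (fun x => ‖g x‖ ^ 2 + ‖h x‖ ^ 2) μ := hg.add hh
        rw [integral_sub hgh' (hgh.const_mul 2), integral_add hg hh, integral_const_mul]

theorem integral_norm_neg_add_sq_le (hg : Integrable (fun x => ‖g x‖ ^ 2) μ)
    (hh : Integrable (fun x => ‖h x‖ ^ 2) μ) :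
    ∫ x, ‖-g x + h x‖ ^ 2 ∂μ ≤ 2 * (∫ x, ‖g x‖ ^ 2 ∂μ + ∫ x, ‖h x‖ ^ 2 ∂μ) := by
  rw [← integral_add hg hh, ← integral_const_mul]
  refine integral_mono_of_nonneg (.of_forall fun x => by positivity)
    ((hg.add hh).const_mul 2) (.of_forall fun x => ?_)
  have hpar := parallelogram_law_with_norm ℝ (-g x) (h x)
  rw [norm_neg] at hpar
  nlinarith [sq_nonneg ‖-g x - h x‖]

end Expansion

namespace SchwartzMap

variable {F : Type*} [NormedAddCommGroup F] [InnerProductSpace ℝ F]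

noncomputable def mulCoord : 𝓢(ℝ, F) →L[ℝ] 𝓢(ℝ, F) := smulLeftCLM F (fun x : ℝ => x)

@[simp]
theorem mulCoord_apply (f : 𝓢(ℝ, F)) (x : ℝ) : mulCoord f x = x • f x :=
  smulLeftCLM_apply_apply Function.HasTemperateGrowth.id' f x

theorem mulCoord_mulCoord_apply (f : 𝓢(ℝ, F)) (x : ℝ) :
    mulCoord (mulCoord f) x = x ^ 2 • f x := by
  rw [mulCoord_apply, mulCoord_apply, smul_smul, sq]

theorem coe_derivCLM (f : 𝓢(ℝ, F)) : ⇑(derivCLM ℝ F f) = deriv f := rfl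

theorem deriv_mulCoord (f : 𝓢(ℝ, F)) (x : ℝ) : deriv (mulCoord f) x = f x + x • deriv f x := by
  have hd : HasDerivAt (fun y : ℝ => y • f y) (f x + x • deriv f x) x := by
    simpa only [one_smul, add_comm] using (hasDerivAt_id' x).fun_smul (f.hasDerivAt x)
  rw [show ⇑(mulCoord f) = fun y => y • f y from funext (mulCoord_apply f), hd.deriv]

theorem integrable_inner (g h : 𝓢(ℝ, F)) : Integrable (fun x => ⟪g x, h x⟫) :=
  (pairing (innerSL ℝ) g h).integrable

theorem integrable_norm_sq (g : 𝓢(ℝ, F)) : Integrable (fun x => ‖g x‖ ^ 2) := by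
  simpa only [real_inner_self_eq_norm_sq] using integrable_inner g g

theorem integral_inner_deriv_right_eq_neg_left (g h : 𝓢(ℝ, F)) :
    ∫ x, ⟪g x, deriv h x⟫ = -∫ x, ⟪deriv g x, h x⟫ :=
  integral_bilinear_deriv_right_eq_neg_left g h (innerSL ℝ)

theorem two_mul_integral_inner_smul_deriv (f : 𝓢(ℝ, F)) :
    2 * ∫ x, ⟪x • f x, deriv f x⟫ = -∫ x, ‖f x‖ ^ 2 := by
  have hibp := integral_inner_deriv_right_eq_neg_left (mulCoord f) f
  have hsymm : ∀ x : ℝ, ⟪x • deriv f x, f x⟫ = ⟪x • f x, deriv f x⟫ := fun x => by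
    rw [real_inner_smul_left, real_inner_smul_left, real_inner_comm]
  simp only [mulCoord_apply, deriv_mulCoord, inner_add_left, real_inner_self_eq_norm_sq,
    hsymm] at hibp
  have hcross := integrable_inner (mulCoord f) (derivCLM ℝ F f)
  simp only [mulCoord_apply, coe_derivCLM] at hcross
  rw [integral_add (integrable_norm_sq f) hcross] at hibp
  linarith

theorem integral_inner_sq_smul_deriv_deriv (f : 𝓢(ℝ, F)) :
    ∫ x, ⟪x ^ 2 • f x, deriv (deriv f) x⟫ = (∫ x, ‖f x‖ ^ 2) - ∫ x, ‖x • deriv f x‖ ^ 2 := by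
  have hibp := integral_inner_deriv_right_eq_neg_left (mulCoord (mulCoord f)) (derivCLM ℝ F f)
  have hexpand : ∀ x : ℝ, ⟪deriv (mulCoord (mulCoord f)) x, deriv f x⟫
      = 2 * ⟪x • f x, deriv f x⟫ + ‖x • deriv f x‖ ^ 2 := fun x => by
    rw [deriv_mulCoord, mulCoord_apply, deriv_mulCoord, ← real_inner_self_eq_norm_sq]
    simp only [inner_add_left, real_inner_smul_left, real_inner_smul_right]
    ring
  have hcross := integrable_inner (mulCoord f) (derivCLM ℝ F f)
  have hsq := integrable_norm_sq (mulCoord (derivCLM ℝ F f))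
  simp only [mulCoord_apply, coe_derivCLM] at hcross hsq
  simp only [mulCoord_mulCoord_apply, coe_derivCLM, hexpand] at hibp
  rw [hibp, integral_add (hcross.const_mul 2) hsq, integral_const_mul,
    two_mul_integral_inner_smul_deriv]
  ring

theorem integral_inner_sq_smul_deriv_deriv_le (f : 𝓢(ℝ, F)) :
    ∫ x, ⟪x ^ 2 • f x, deriv (deriv f) x⟫ ≤ ∫ x, ‖f x‖ ^ 2 := by
  rw [integral_inner_sq_smul_deriv_deriv, sub_le_self_iff]
  exact integral_nonneg fun x => by positivity

theorem integral_norm_sq_harmonic_ge (f : 𝓢(ℝ, F)) :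
    (∫ x, ‖deriv (deriv f) x‖ ^ 2) + (∫ x, ‖x ^ 2 • f x‖ ^ 2) - 2 * ∫ x, ‖f x‖ ^ 2
      ≤ ∫ x, ‖-deriv (deriv f) x + x ^ 2 • f x‖ ^ 2 := by
  have hf'' := integrable_norm_sq (derivCLM ℝ F (derivCLM ℝ F f))
  have hx2f := integrable_norm_sq (mulCoord (mulCoord f))
  have hcross := integrable_inner (mulCoord (mulCoord f)) (derivCLM ℝ F (derivCLM ℝ F f))
  simp only [mulCoord_mulCoord_apply, coe_derivCLM] at hf'' hx2f hcross
  rw [integral_norm_neg_add_sq hf'' hx2f hcross]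
  linarith [integral_inner_sq_smul_deriv_deriv_le f]

theorem integral_norm_sq_harmonic_le (f : 𝓢(ℝ, F)) :
    ∫ x, ‖-deriv (deriv f) x + x ^ 2 • f x‖ ^ 2
      ≤ 2 * ((∫ x, ‖deriv (deriv f) x‖ ^ 2) + ∫ x, ‖x ^ 2 • f x‖ ^ 2) := by
  have hf'' := integrable_norm_sq (derivCLM ℝ F (derivCLM ℝ F f))
  have hx2f := integrable_norm_sq (mulCoord (mulCoord f))
  simp only [mulCoord_mulCoord_apply, coe_derivCLM] at hf'' hx2f
  exact integral_norm_neg_add_sq_le hf'' hx2f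

end SchwartzMap

theorem L2N_sq (g : ℝ → ℂ) : L2N g ^ 2 = ∫ x, ‖g x‖ ^ 2 := by
  rw [L2N, ← Real.rpow_natCast, ← Real.rpow_mul (integral_nonneg fun x => by positivity)]
  norm_num

/-- Graph-norm equivalence for the harmonic oscillator `T = -d²/dx² + x²`. -/
theorem stmt_0 :
    ∃ k₁ k₂ : ℝ, 0 < k₁ ∧ 0 < k₂ ∧
      ∀ f : SchwartzMap ℝ ℂ,
        k₁ * (L2N (deriv (deriv ⇑f)) ^ 2 + L2N (fun x : ℝ => (x : ℂ) ^ 2 * f x) ^ 2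
            + L2N ⇑f ^ 2)
          ≤ L2N (fun x : ℝ => -(deriv (deriv ⇑f) x) + (x : ℂ) ^ 2 * f x) ^ 2 + L2N ⇑f ^ 2 ∧
        L2N (fun x : ℝ => -(deriv (deriv ⇑f) x) + (x : ℂ) ^ 2 * f x) ^ 2 + L2N ⇑f ^ 2
          ≤ k₂ * (L2N (deriv (deriv ⇑f)) ^ 2 + L2N (fun x : ℝ => (x : ℂ) ^ 2 * f x) ^ 2
            + L2N ⇑f ^ 2) := by
  refine ⟨1 / 3, 2, by norm_num, by norm_num, fun f => ?_⟩
  have hsmul : ∀ x : ℝ, (x : ℂ) ^ 2 * f x = x ^ 2 • f x := fun x => by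
    rw [Complex.real_smul, Complex.ofReal_pow]
  simp only [L2N_sq, hsmul]
  have hge := f.integral_norm_sq_harmonic_ge
  have hle := f.integral_norm_sq_harmonic_le
  have hf : 0 ≤ ∫ x, ‖f x‖ ^ 2 := integral_nonneg fun x => by positivity
  have hT : 0 ≤ ∫ x, ‖-deriv (deriv f) x + x ^ 2 • f x‖ ^ 2 :=
    integral_nonneg fun x => by positivity
  constructor <;> linarith
end

section
/- Let a ∈ ℝ and let v ∈ L²(ℝ, ℂ). If for every k ∈ ℕ one has ∫_ℝ v(ξ)·ξ^k·e^{-aξ - ξ²} dξ = 0, then v = 0 almost everywhere. -/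
/-!
Put `w x = v x e^{-ax - x²}`. Since `v ∈ L²`, `e^{c|x|} w` is integrable for every `c`, so the
character `e^{-2πixt}` can be expanded in its power series and integrated term by term against
`w`: every term is a multiple of a moment of `w`, so `𝓕 w = 0`. By Fourier uniqueness for
integrable functions `w = 0` a.e., hence `v = 0` a.e. since the Gaussian weight never vanishes.
-/

open MeasureTheory FourierTransform SchwartzMap Real
open scoped Nat ContDiff

lemma mul_abs_sub_mul_sub_sq_le (a c x : ℝ) :
    c * |x| - a * x - x ^ 2 ≤ (|c| + |a|) ^ 2 - x ^ 2 / 2 := by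
  have hc : c * |x| ≤ |c| * |x| := mul_le_mul_of_nonneg_right (le_abs_self c) (abs_nonneg x)
  have ha : -(a * x) ≤ |a| * |x| := by rw [← abs_mul]; exact neg_le_abs (a * x)
  nlinarith [sq_nonneg (|x| - (|c| + |a|)), sq_abs x]

lemma memLp_two_exp_neg_sq_div_two : MemLp (fun x : ℝ ↦ exp (-x ^ 2 / 2)) 2 := by
  refine (memLp_two_iff_integrable_sq_norm (by fun_prop)).2 ?_
  refine (integrable_exp_neg_mul_sq one_pos).congr (.of_forall fun x ↦ ?_)
  simp only [norm_of_nonneg (exp_pos _).le, ← exp_nat_mul]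
  ring_nf

lemma MeasureTheory.MemLp.integrable_exp_mul_abs_smul_mul_cexp {v : ℝ → ℂ} (hv : MemLp v 2)
    (a c : ℝ) : Integrable fun x ↦
      exp (c * |x|) • (v x * Complex.exp (-((a : ℂ) * x) - (x : ℂ) ^ 2)) := by
  set g : ℝ → ℂ := fun x ↦ ↑(exp (c * |x| - a * x - x ^ 2))
  have hg : MemLp g 2 := by
    refine (memLp_two_exp_neg_sq_div_two.const_mul (exp ((|c| + |a|) ^ 2))).of_le
      (by fun_prop) (.of_forall fun x ↦ ?_)
    simp only [g, Complex.norm_real, norm_of_nonneg (exp_pos _).le, ← exp_add]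
    exact exp_le_exp.2 (by linarith [mul_abs_sub_mul_sub_sq_le a c x])
  refine (hv.integrable_mul hg).congr (.of_forall fun x ↦ ?_)
  simp only [Pi.mul_apply, g, Complex.real_smul, Complex.ofReal_exp]
  rw [mul_left_comm, ← Complex.exp_add]
  push_cast
  ring_nf

namespace Real

variable {F : Type*} [NormedAddCommGroup F] [NormedSpace ℂ F]

theorem fourier_eq_zero_of_integral_pow_smul_eq_zero {f : ℝ → F}
    (hf : ∀ c : ℝ, Integrable (fun x ↦ exp (c * |x|) • f x))
    (h : ∀ k : ℕ, ∫ x, x ^ k • f x = 0) : 𝓕 f = 0 := by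
  have hf_meas : AEStronglyMeasurable f := by simpa using (hf 0).aestronglyMeasurable
  ext t
  set z : ℝ → ℂ := fun x ↦ ↑(-2 * π * x * t) * Complex.I
  set F : ℕ → ℝ → F := fun k x ↦ (z x ^ k / k !) • f x
  have hF_eq : ∀ k,
      F k = fun x ↦ ((↑(-2 * π * t) * Complex.I) ^ k / k !) • (x ^ k • f x) := by
    intro k
    ext x
    rw [← Complex.coe_smul, smul_smul]
    simp only [F, z]
    push_cast
    ring_nf
  have hF_norm : ∀ k x, ‖F k x‖ = (2 * π * |t| * |x|) ^ k / k ! * ‖f x‖ := by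
    intro k x
    simp only [F, z, norm_smul, norm_div, norm_pow, norm_mul, Complex.norm_real, Complex.norm_I,
      mul_one, Complex.norm_natCast, norm_eq_abs]
    congr 3
    simp [abs_of_pos pi_pos]
    ring
  have hexp (y : ℝ) : ∑' k : ℕ, y ^ k / k ! = exp y := by
    rw [exp_eq_exp_ℝ]
    exact (NormedSpace.expSeries_div_hasSum_exp y).tsum_eq
  have hsum : HasSum (fun k ↦ ∫ x, F k x) (∫ x, Complex.exp (z x) • f x) := by
    refine hasSum_integral_of_dominated_convergence
      (fun k x ↦ (2 * π * |t| * |x|) ^ k / k ! * ‖f x‖)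
      (fun k ↦ (Continuous.aestronglyMeasurable (by fun_prop)).smul hf_meas)
      (fun k ↦ .of_forall fun x ↦ (hF_norm k x).le)
      (.of_forall fun x ↦ (summable_pow_div_factorial _).mul_right _) ?_ (.of_forall fun x ↦ ?_)
    · simpa [tsum_mul_right, hexp, norm_smul, mul_assoc] using (hf (2 * π * |t|)).norm
    · simpa [← Complex.exp_eq_exp_ℂ] using
        (NormedSpace.expSeries_div_hasSum_exp (z x)).smul_const (f x)
  rw [fourier_real_eq_integral_exp_smul, Pi.zero_apply]
  refine hsum.unique ?_
  convert hasSum_zero with k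
  rw [hF_eq, integral_smul, h, smul_zero]

theorem ae_eq_zero_of_fourier_eq_zero {V : Type*} [NormedAddCommGroup V]
    [InnerProductSpace ℝ V] [FiniteDimensional ℝ V] [MeasurableSpace V] [BorelSpace V]
    [CompleteSpace F] {f : V → F} (hf : Integrable f) (h : 𝓕 f = 0) : f =ᵐ[volume] 0 := by
  refine ae_eq_zero_of_integral_contDiff_smul_eq_zero hf.locallyIntegrable
    fun g g_smooth g_supp ↦ ?_
  have hψ : HasCompactSupport (Complex.ofRealCLM ∘ g) := g_supp.comp_left rfl
  set ψ : 𝓢(V, ℂ) := hψ.toSchwartzMap (by fun_prop)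
  -- `ψ = 𝓕 η`, and the Fourier transform is self-adjoint on integrable functions
  set η : 𝓢(V, ℂ) := 𝓕⁻ ψ
  have hη : ∫ x, 𝓕 (⇑η) x • f x = ∫ x, η x • 𝓕 f x := by
    simpa using! VectorFourier.integral_fourierIntegral_smul_eq_flip (L := innerₗ V)
      continuous_fourierChar continuous_inner (η.integrable (μ := volume)) hf
  calc ∫ x, g x • f x = ∫ x, 𝓕 (⇑η) x • f x := by
        congr 1 with x
        rw [← fourier_coe, fourier_fourierInv_eq]
        simp [ψ, Complex.coe_smul]
    _ = 0 := by
        rw [hη, h]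
        simp

end Real

/-- If `v ∈ L²(ℝ, ℂ)` and all the moments `∫ v(ξ) ξ^k e^{-aξ - ξ²} dξ` vanish,
then `v = 0` almost everywhere. -/
theorem stmt_4 (a : ℝ) (v : ℝ → ℂ) (hv : MemLp v 2 (volume : Measure ℝ))
    (h : ∀ k : ℕ, ∫ ξ : ℝ, v ξ * (ξ : ℂ) ^ k * Complex.exp (-((a : ℂ) * ξ) - (ξ : ℂ) ^ 2) = 0) :
    v =ᵐ[(volume : Measure ℝ)] 0 := by
  set w : ℝ → ℂ := fun x ↦ v x * Complex.exp (-((a : ℂ) * x) - (x : ℂ) ^ 2)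
  have hw : ∀ c : ℝ, Integrable (fun x ↦ exp (c * |x|) • w x) :=
    hv.integrable_exp_mul_abs_smul_mul_cexp a
  have hmoments : ∀ k : ℕ, ∫ x, x ^ k • w x = 0 := by
    intro k
    rw [← h k]
    congr 1 with x
    rw [← Complex.coe_smul, smul_eq_mul]
    push_cast
    ring
  have hw_zero : w =ᵐ[volume] 0 :=
    ae_eq_zero_of_fourier_eq_zero (by simpa using hw 0)
      (fourier_eq_zero_of_integral_pow_smul_eq_zero hw hmoments)
  filter_upwards [hw_zero] with x hx
  simpa [w, Complex.exp_ne_zero] using hx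
end

section
/- Let β > 2 and ε > 0. Then there exist c > 0 and Λ > 0 such that for every λ ≥ Λ and every normalized eigenfunction u of the anharmonic oscillator with eigenvalue λ, one has u(x)² ≤ exp(−2c·|x|^{1+β/2}) for every x ∈ ℝ with |x| > ((1+ε)·λ)^{1/β}. -/
/-!
Beyond the turning point `t^β ≥ λ` the function `w = u²` satisfies
`w'' = 2u'² + 2(t^β - λ)u² ≥ 0`; being convex and integrable on a half-line, it is
nonincreasing there. The energy `E = u'² - (t^β - λ)u²` satisfies `E' = -β t^{β-1} u² ≤ 0`,
and it stays nonnegative, since `E ≤ -η < 0` would give `w'' ≥ 2η`. With `uu' ≤ 0`,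
`E ≥ 0` yields `w' ≤ -2√(t^β - λ) w`, so `w` decays like `exp(-(2√δ/p) t^p)`, `p = 1 + β/2`,
wherever `t^β - λ ≥ δ t^β`; normalisation bounds `w` by `1` one unit past the turning point.
Negative `x` follow by the reflection `x ↦ -x`.
-/

open MeasureTheory Set Filter Real

lemma antitoneOn_of_forall_hasDerivAt_nonpos {D : Set ℝ} (hD : Convex ℝ D) {f f' : ℝ → ℝ}
    (hf : ∀ t ∈ D, HasDerivAt f (f' t) t) (hf' : ∀ t ∈ D, f' t ≤ 0) : AntitoneOn f D :=
  antitoneOn_of_hasDerivWithinAt_nonpos hD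
    (fun t ht ↦ (hf t ht).continuousAt.continuousWithinAt)
    (fun t ht ↦ (hf t (interior_subset ht)).hasDerivWithinAt)
    (fun t ht ↦ hf' t (interior_subset ht))

lemma monotoneOn_of_forall_hasDerivAt_nonneg {D : Set ℝ} (hD : Convex ℝ D) {f f' : ℝ → ℝ}
    (hf : ∀ t ∈ D, HasDerivAt f (f' t) t) (hf' : ∀ t ∈ D, 0 ≤ f' t) : MonotoneOn f D :=
  monotoneOn_of_hasDerivWithinAt_nonneg hD
    (fun t ht ↦ (hf t ht).continuousAt.continuousWithinAt)
    (fun t ht ↦ (hf t (interior_subset ht)).hasDerivWithinAt)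
    (fun t ht ↦ hf' t (interior_subset ht))

lemma HasDerivAt.nonpos_of_antitoneOn_Ici {f : ℝ → ℝ} {f' a t : ℝ} (hf : HasDerivAt f f' t)
    (hanti : AntitoneOn f (Ici a)) (ht : a ≤ t) : f' ≤ 0 := by
  refine hf.hasDerivWithinAt.nonpos_of_antitoneOn ?_ (hanti.mono (Ioi_subset_Ici ht))
  rw [accPt_principal_iff_nhdsWithin, sdiff_singleton_eq_self self_notMem_Ioi]
  infer_instance

theorem ContDiff.hasDerivAt_deriv_of_two {u : ℝ → ℝ} (hu : ContDiff ℝ 2 u) (t : ℝ) :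
    HasDerivAt (deriv u) (deriv (deriv u) t) t :=
  ((contDiff_succ_iff_deriv (n := 1)).1 hu).2.2.differentiable one_ne_zero t |>.hasDerivAt

theorem ContDiff.hasDerivAt_sq_of_two {u : ℝ → ℝ} (hu : ContDiff ℝ 2 u) (t : ℝ) :
    HasDerivAt (fun t ↦ u t ^ 2) (2 * u t * deriv u t) t := by
  simpa using ((hu.differentiable (by norm_num) t).hasDerivAt).fun_pow 2

lemma not_integrableOn_Ici_of_forall_le {f : ℝ → ℝ} {a c : ℝ} (hc : 0 < c)
    (hf : ∀ t ∈ Ici a, c ≤ f t) : ¬ IntegrableOn f (Ici a) := by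
  intro hint
  have hconst : IntegrableOn (fun _ ↦ c) (Ici a) :=
    hint.mono' aestronglyMeasurable_const <| (ae_restrict_mem measurableSet_Ici).mono
      fun t ht ↦ by rw [Real.norm_of_nonneg hc.le]; exact hf t ht
  simp [integrableOn_const_iff, hc.ne'] at hconst

theorem ConvexOn.antitoneOn_of_integrableOn_Ici {f : ℝ → ℝ} {a : ℝ}
    (hf : ConvexOn ℝ (Ici a) f) (hint : IntegrableOn f (Ici a)) : AntitoneOn f (Ici a) := by
  intro x hx y hy hxy
  by_contra! hlt
  have hxy' : x < y := hxy.lt_of_ne (by rintro rfl; exact hlt.false)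
  set m := (f y - f x) / (y - x)
  have hm : 0 < m := div_pos (sub_pos.2 hlt) (sub_pos.2 hxy')
  have hline : ∀ t, y ≤ t → f y + m * (t - y) ≤ f t := by
    intro t hyt
    rcases hyt.eq_or_lt with rfl | hyt
    · simp
    have := hf.slope_mono_adjacent hx (hy.trans hyt.le) hxy' hyt
    rw [le_div_iff₀ (sub_pos.2 hyt)] at this
    linarith
  refine not_integrableOn_Ici_of_forall_le one_pos (a := y + |1 - f y| / m) (fun t ht ↦ ?_)
    (hint.mono_set (Ici_subset_Ici.2 ?_))
  · have h1 : y + |1 - f y| / m ≤ t := ht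
    have hyt : y ≤ t := le_trans (le_add_of_nonneg_right (by positivity)) h1
    have h2 : |1 - f y| ≤ m * (t - y) := (div_le_iff₀' hm).1 (by linarith)
    linarith [hline t hyt, le_abs_self (1 - f y)]
  · exact hy.trans (le_add_of_nonneg_right (by positivity))

theorem AntitoneOn.sub_mul_le_integral {f : ℝ → ℝ} {a b : ℝ} (hab : a ≤ b)
    (hanti : AntitoneOn f (Icc a b)) (hint : Integrable f) (hf : 0 ≤ f) :
    (b - a) * f b ≤ ∫ t, f t :=
  calc (b - a) * f b = ∫ _ in Icc a b, f b := by simp [hab]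
    _ ≤ ∫ t in Icc a b, f t :=
      setIntegral_mono_on (integrableOn_const measure_Icc_lt_top.ne) hint.integrableOn
        measurableSet_Icc fun t ht ↦ hanti ht ⟨hab, le_rfl⟩ ht.2
    _ ≤ ∫ t, f t := setIntegral_le_integral hint (Eventually.of_forall hf)

theorem antitoneOn_mul_exp_of_hasDerivAt {D : Set ℝ} (hD : Convex ℝ D) {f f' g g' : ℝ → ℝ}
    (hf : ∀ t ∈ D, HasDerivAt f (f' t) t) (hg : ∀ t ∈ D, HasDerivAt g (g' t) t)
    (h : ∀ t ∈ D, f' t + g' t * f t ≤ 0) : AntitoneOn (fun t ↦ f t * exp (g t)) D := by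
  refine antitoneOn_of_forall_hasDerivAt_nonpos hD
    (fun t ht ↦ (hf t ht).mul (hg t ht).exp) fun t ht ↦ ?_
  have := mul_nonpos_of_nonneg_of_nonpos (exp_pos (g t)).le (h t ht)
  linarith

lemma mul_sq_le_neg_mul {k a b : ℝ} (hk : 0 ≤ k) (hab : a * b ≤ 0) (h : k ^ 2 * a ^ 2 ≤ b ^ 2) :
    k * a ^ 2 ≤ -(a * b) := by
  have hka : |k * a| ≤ |b| := sq_le_sq.1 (by rwa [mul_pow])
  calc k * a ^ 2 = |k * a| * |a| := by
        rw [abs_mul, abs_of_nonneg hk, mul_assoc, abs_mul_abs_self, sq]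
    _ ≤ |b| * |a| := mul_le_mul_of_nonneg_right hka (abs_nonneg a)
    _ = -(a * b) := by rw [← abs_mul, mul_comm, abs_of_nonpos hab]

namespace AnharmonicOscillator

structure IsNormalizedEigenfunction (β lam : ℝ) (u : ℝ → ℝ) : Prop where
  contDiff : ContDiff ℝ 2 u
  memLp : MemLp u 2 volume
  integral_sq : ∫ x, u x ^ 2 = 1
  ode : ∀ x, -(deriv (deriv u) x) + |x| ^ β * u x = lam * u x

noncomputable def energy (β lam : ℝ) (u : ℝ → ℝ) (t : ℝ) : ℝ :=
  deriv u t ^ 2 - (t ^ β - lam) * u t ^ 2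

section HalfLine

variable {β lam : ℝ} {u : ℝ → ℝ} (hu : ContDiff ℝ 2 u)
  (hode : ∀ x, -(deriv (deriv u) x) + |x| ^ β * u x = lam * u x)

include hode in
theorem deriv_deriv_eq {t : ℝ} (ht : 0 ≤ t) : deriv (deriv u) t = (t ^ β - lam) * u t := by
  have := hode t
  rw [abs_of_nonneg ht] at this
  linear_combination -this

include hu hode

theorem hasDerivAt_two_mul_mul_deriv {t : ℝ} (ht : 0 ≤ t) :
    HasDerivAt (fun t ↦ 2 * u t * deriv u t)
      (2 * deriv u t ^ 2 + 2 * (t ^ β - lam) * u t ^ 2) t := by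
  refine ((((hu.differentiable (by norm_num) t).hasDerivAt).const_mul 2).mul
    (hu.hasDerivAt_deriv_of_two t)).congr_deriv ?_
  rw [deriv_deriv_eq hode ht]
  ring

theorem convexOn_sq_Ici (hβ : 0 ≤ β) {t₀ : ℝ} (ht₀ : 0 ≤ t₀) (hlam : lam ≤ t₀ ^ β) :
    ConvexOn ℝ (Ici t₀) (fun t ↦ u t ^ 2) := by
  refine convexOn_of_hasDerivWithinAt2_nonneg (convex_Ici t₀)
    (hu.continuous.pow 2).continuousOn
    (fun t _ ↦ (hu.hasDerivAt_sq_of_two t).hasDerivWithinAt)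
    (fun t ht ↦ (hasDerivAt_two_mul_mul_deriv hu hode
      (ht₀.trans (interior_subset ht))).hasDerivWithinAt)
    fun t ht ↦ ?_
  have hVt : lam ≤ t ^ β := hlam.trans (rpow_le_rpow ht₀ (interior_subset ht) hβ)
  have := mul_nonneg (sub_nonneg.2 hVt) (sq_nonneg (u t))
  linarith [sq_nonneg (deriv u t)]

theorem antitoneOn_sq_Ici (hL2 : MemLp u 2 volume) (hβ : 0 ≤ β) {t₀ : ℝ} (ht₀ : 0 ≤ t₀)
    (hlam : lam ≤ t₀ ^ β) : AntitoneOn (fun t ↦ u t ^ 2) (Ici t₀) :=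
  (convexOn_sq_Ici hu hode hβ ht₀ hlam).antitoneOn_of_integrableOn_Ici
    hL2.integrable_sq.integrableOn

theorem mul_deriv_nonpos (hL2 : MemLp u 2 volume) (hβ : 0 ≤ β) {t₀ t : ℝ} (ht₀ : 0 ≤ t₀)
    (hlam : lam ≤ t₀ ^ β) (ht : t₀ ≤ t) : u t * deriv u t ≤ 0 := by
  have := (hu.hasDerivAt_sq_of_two t).nonpos_of_antitoneOn_Ici
    (antitoneOn_sq_Ici hu hode hL2 hβ ht₀ hlam) ht
  linarith

theorem antitoneOn_energy (hβ : 0 ≤ β) : AntitoneOn (energy β lam u) (Ioi 0) := by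
  refine antitoneOn_of_forall_hasDerivAt_nonpos (convex_Ioi 0)
    (f' := fun t ↦ -(β * t ^ (β - 1) * u t ^ 2)) (fun t ht ↦ ?_) fun t ht ↦ ?_
  · refine (((hu.hasDerivAt_deriv_of_two t).fun_pow 2).sub
      (((hasDerivAt_rpow_const (p := β) (Or.inl (ne_of_gt ht))).sub_const lam).fun_mul
        (hu.hasDerivAt_sq_of_two t))).congr_deriv ?_
    rw [deriv_deriv_eq hode (le_of_lt ht)]
    ring
  · have := mul_nonneg (mul_nonneg hβ (rpow_nonneg (le_of_lt ht) (β - 1))) (sq_nonneg (u t))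
    linarith

theorem energy_nonneg (hL2 : MemLp u 2 volume) (hβ : 0 ≤ β) {t₀ t : ℝ} (ht₀ : 0 < t₀)
    (hlam : lam ≤ t₀ ^ β) (ht : t₀ ≤ t) : 0 ≤ energy β lam u t := by
  by_contra! hneg
  set η := -energy β lam u t
  have hη : 0 < η := neg_pos.2 hneg
  have hw'' : ∀ s ∈ Ici t, 2 * η ≤ 2 * deriv u s ^ 2 + 2 * (s ^ β - lam) * u s ^ 2 := by
    intro s hs
    have henergy := antitoneOn_energy hu hode hβ (mem_Ioi.2 (ht₀.trans_le ht))
      (mem_Ioi.2 (ht₀.trans_le (ht.trans hs))) hs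
    simp only [energy, η] at henergy ⊢
    linarith [sq_nonneg (deriv u s)]
  have hmono : MonotoneOn (fun s ↦ 2 * u s * deriv u s - 2 * η * s) (Ici t) :=
    monotoneOn_of_forall_hasDerivAt_nonneg (convex_Ici t)
      (fun s hs ↦ ((hasDerivAt_two_mul_mul_deriv hu hode
        (ht₀.le.trans (ht.trans hs))).sub ((hasDerivAt_id s).const_mul (2 * η))))
      fun s hs ↦ by simpa using hw'' s hs
  have hwt := mul_deriv_nonpos hu hode hL2 hβ ht₀.le hlam ht
  set s := t + (1 - 2 * u t * deriv u t) / (2 * η)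
  have hts : t ≤ s := le_add_of_nonneg_right (div_nonneg (by linarith) (by linarith))
  have hgrowth : 2 * η * (s - t) = 1 - 2 * u t * deriv u t := by
    simp only [s]
    field_simp
    ring
  have hws := mul_deriv_nonpos hu hode hL2 hβ ht₀.le hlam (ht.trans hts)
  have hmono_ts : 2 * u t * deriv u t - 2 * η * t ≤ 2 * u s * deriv u s - 2 * η * s :=
    hmono self_mem_Ici hts hts
  linarith

theorem mul_sq_le_neg_mul_deriv (hL2 : MemLp u 2 volume) (hβ : 0 ≤ β) {t₀ t k : ℝ} (ht₀ : 0 < t₀)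
    (hlam : lam ≤ t₀ ^ β) (ht : t₀ ≤ t) (hk : 0 ≤ k) (hkt : k ^ 2 ≤ t ^ β - lam) :
    k * u t ^ 2 ≤ -(u t * deriv u t) := by
  refine mul_sq_le_neg_mul hk (mul_deriv_nonpos hu hode hL2 hβ ht₀.le hlam ht) ?_
  have henergy := energy_nonneg hu hode hL2 hβ ht₀ hlam ht
  have := mul_le_mul_of_nonneg_right hkt (sq_nonneg (u t))
  unfold energy at henergy
  linarith

end HalfLine

namespace IsNormalizedEigenfunction

variable {β lam : ℝ} {u : ℝ → ℝ}

theorem comp_neg (hu : IsNormalizedEigenfunction β lam u) :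
    IsNormalizedEigenfunction β lam (fun x ↦ u (-x)) where
  contDiff := hu.contDiff.comp contDiff_neg
  memLp := hu.memLp.comp_measurePreserving (Measure.measurePreserving_neg volume)
  integral_sq := (integral_neg_eq_self (fun x ↦ u x ^ 2) volume).trans hu.integral_sq
  ode x := by
    have hderiv : deriv (fun y ↦ u (-y)) = fun y ↦ -deriv u (-y) := funext (deriv_comp_neg u)
    simpa [hderiv, deriv_comp_neg (deriv u)] using hu.ode (-x)

theorem sq_le_exp (hu : IsNormalizedEigenfunction β lam u) (hβ : 0 < β) {t₀ s x δ : ℝ}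
    (ht₀ : 0 < t₀) (hlam : lam ≤ t₀ ^ β) (hs : t₀ + 1 ≤ s) (hδ₀ : 0 ≤ δ) (hδ₁ : δ ≤ 1)
    (hδs : lam ≤ (1 - δ) * s ^ β) (hsx : s ≤ x) :
    u x ^ 2 ≤ exp (-(2 * √δ / (1 + β / 2) * (x ^ (1 + β / 2) - s ^ (1 + β / 2)))) := by
  set p := 1 + β / 2
  have hp : 0 < p := by positivity
  have hs₀ : 0 < s := by linarith
  have hus : u s ^ 2 ≤ 1 := by
    have hanti := (antitoneOn_sq_Ici hu.contDiff hu.ode hu.memLp hβ.le ht₀.le hlam).mono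
      ((Icc_subset_Ici_iff (show s - 1 ≤ s by linarith)).2 (show t₀ ≤ s - 1 by linarith))
    have := hanti.sub_mul_le_integral (by linarith) hu.memLp.integrable_sq
      fun t ↦ sq_nonneg (u t)
    rw [hu.integral_sq] at this
    linarith
  have hweight : AntitoneOn (fun t ↦ u t ^ 2 * exp (2 * √δ / p * t ^ p)) (Ici s) := by
    refine antitoneOn_mul_exp_of_hasDerivAt (convex_Ici s)
      (fun t _ ↦ hu.contDiff.hasDerivAt_sq_of_two t)
      (fun t ht ↦ ((hasDerivAt_rpow_const (Or.inl (hs₀.trans_le ht).ne')).const_mul _))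
      fun t ht ↦ ?_
    have ht₀' : 0 < t := hs₀.trans_le ht
    rw [mem_Ici] at ht
    have hrate : 2 * √δ / p * (p * t ^ (p - 1)) = 2 * (√δ * t ^ (β / 2)) := by
      rw [show p - 1 = β / 2 by ring]
      field_simp
    have hk : (√δ * t ^ (β / 2)) ^ 2 ≤ t ^ β - lam := by
      rw [mul_pow, sq_sqrt hδ₀, ← rpow_natCast, ← rpow_mul ht₀'.le,
        show β / 2 * ((2 : ℕ) : ℝ) = β by push_cast; ring]
      have := mul_le_mul_of_nonneg_left (rpow_le_rpow hs₀.le ht hβ.le) (sub_nonneg.2 hδ₁)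
      linarith
    have := mul_sq_le_neg_mul_deriv hu.contDiff hu.ode hu.memLp hβ.le ht₀ hlam (by linarith)
      (by positivity) hk
    rw [hrate]
    linarith
  set g := fun t : ℝ ↦ 2 * √δ / p * t ^ p
  calc u x ^ 2 = u x ^ 2 * exp (g x) * exp (-g x) := by
        rw [mul_assoc, ← exp_add, add_neg_cancel, exp_zero, mul_one]
    _ ≤ u s ^ 2 * exp (g s) * exp (-g x) :=
        mul_le_mul_of_nonneg_right (hweight self_mem_Ici hsx hsx) (exp_pos _).le
    _ ≤ 1 * exp (g s) * exp (-g x) := by gcongr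
    _ = exp (-(2 * √δ / p * (x ^ p - s ^ p))) := by
        rw [one_mul, ← exp_add]
        simp only [g]
        ring_nf

end IsNormalizedEigenfunction

-- Apply `sq_le_exp` with `t₀ = λ^{1/β}`, `s = ((1 + ε/2) λ)^{1/β}` and `δ = ε / (2 + ε)`,
-- so that `(1 - δ) s^β = λ`; then `s = ρ ((1 + ε) λ)^{1/β}` with `ρ < 1` independent of `λ`,
-- and `λ ≥ Λ` gives `s - t₀ = (γ - 1) t₀ ≥ 1`.
theorem exists_sq_le_exp_of_lt {β ε : ℝ} (hβ : 0 < β) (hε : 0 < ε) :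
    ∃ c : ℝ, 0 < c ∧ ∃ Λ : ℝ, 0 < Λ ∧ ∀ lam : ℝ, Λ ≤ lam → ∀ u : ℝ → ℝ,
      IsNormalizedEigenfunction β lam u → ∀ x : ℝ, ((1 + ε) * lam) ^ (1 / β) < x →
        u x ^ 2 ≤ exp (-(2 * c * x ^ (1 + β / 2))) := by
  set p := 1 + β / 2
  set δ := ε / (2 + ε) with hδ_def
  set γ := (1 + ε / 2) ^ (1 / β)
  set ρ := ((1 + ε / 2) / (1 + ε)) ^ (1 / β)
  have hp : 0 < p := by positivity
  have hδ : 0 < δ := by positivity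
  have hγ : 1 < γ := one_lt_rpow (by linarith) (by positivity)
  have hρ₀ : 0 < ρ := by positivity
  have hρ₁ : ρ < 1 := rpow_lt_one (by positivity) ((div_lt_one (by linarith)).2 (by linarith))
    (by positivity)
  have hρp : ρ ^ p < 1 := rpow_lt_one hρ₀.le hρ₁ hp
  refine ⟨√δ * (1 - ρ ^ p) / p, div_pos (mul_pos (sqrt_pos.2 hδ) (sub_pos.2 hρp)) hp, ((γ - 1)⁻¹) ^ β,
    rpow_pos_of_pos (inv_pos.2 (by linarith)) _, fun lam hΛ u hu x hx ↦ ?_⟩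
  have hlam : 0 < lam := (rpow_pos_of_pos (inv_pos.2 (by linarith)) _).trans_le hΛ
  set t₀ := lam ^ (1 / β) with ht₀_def
  set s := ((1 + ε / 2) * lam) ^ (1 / β) with hs_def
  set a := ((1 + ε) * lam) ^ (1 / β) with ha_def
  have hs_t₀ : s = γ * t₀ := mul_rpow (by linarith) hlam.le
  have hs_a : s = ρ * a := by
    rw [hs_def, ha_def, ← mul_rpow (by positivity) (by positivity)]
    congr 1
    field_simp
  have ht₀ : (γ - 1)⁻¹ ≤ t₀ :=
    calc (γ - 1)⁻¹ = ((γ - 1)⁻¹ ^ β) ^ (1 / β) := by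
          rw [one_div, rpow_rpow_inv (inv_pos.2 (sub_pos.2 hγ)).le hβ.ne']
      _ ≤ t₀ := rpow_le_rpow (by positivity) hΛ (by positivity)
  have hsx : s ≤ x := (hs_a.trans_le (mul_le_of_le_one_left (by positivity) hρ₁.le)).trans hx.le
  have hdecay := hu.sq_le_exp hβ (t₀ := t₀) (s := s) (x := x) (δ := δ) (by positivity)
    (by rw [ht₀_def, one_div, rpow_inv_rpow hlam.le hβ.ne'])
    (by rw [hs_t₀]; nlinarith [mul_inv_cancel₀ (sub_pos.2 hγ).ne'])
    hδ.le ((div_le_one (by linarith)).2 (by linarith))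
    (by rw [hs_def, one_div, rpow_inv_rpow (by positivity) hβ.ne', hδ_def]
        exact le_of_eq (by field_simp; ring)) hsx
  have hsp : s ^ p ≤ ρ ^ p * x ^ p := by
    rw [hs_a, mul_rpow hρ₀.le (by positivity)]
    gcongr
  refine hdecay.trans (exp_le_exp.2 (neg_le_neg ?_))
  have := sqrt_nonneg δ
  calc 2 * (√δ * (1 - ρ ^ p) / p) * x ^ p = 2 * √δ / p * (x ^ p - ρ ^ p * x ^ p) := by ring
    _ ≤ 2 * √δ / p * (x ^ p - s ^ p) := by gcongr

end AnharmonicOscillator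

/-- Pointwise exponential decay of normalized eigenfunctions of the anharmonic oscillator
`T = -d²/dx² + |x|^β` beyond the turning points. -/
theorem stmt_14 (β ε : ℝ) (hβ : 2 < β) (hε : 0 < ε) :
    ∃ c : ℝ, 0 < c ∧ ∃ Λ : ℝ, 0 < Λ ∧
      ∀ lam : ℝ, Λ ≤ lam →
        ∀ u : ℝ → ℝ, ContDiff ℝ 2 u → MemLp u 2 (volume : Measure ℝ) →
          (∫ x : ℝ, u x ^ 2) = 1 →
          (∀ x : ℝ, -(deriv (deriv u) x) + |x| ^ β * u x = lam * u x) →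
          ∀ x : ℝ, ((1 + ε) * lam) ^ (1 / β) < |x| →
            u x ^ 2 ≤ Real.exp (-(2 * c * |x| ^ (1 + β / 2))) := by
  obtain ⟨c, hc, Λ, hΛ, hdecay⟩ :=
    AnharmonicOscillator.exists_sq_le_exp_of_lt (by linarith : 0 < β) hε
  refine ⟨c, hc, Λ, hΛ, fun lam hlam u hu hL2 hnorm hode x hx ↦ ?_⟩
  have heig : AnharmonicOscillator.IsNormalizedEigenfunction β lam u := ⟨hu, hL2, hnorm, hode⟩
  rcases le_or_gt 0 x with hx₀ | hx₀
  · rw [abs_of_nonneg hx₀] at hx ⊢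
    exact hdecay lam hlam u heig x hx
  · rw [abs_of_neg hx₀] at hx ⊢
    simpa using hdecay lam hlam _ heig.comp_neg (-x) hx
end
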